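/- Let H₀ and H₁ be complex Hilbert spaces, let T₀ and T₁ be bounded operators on H₀ and H₁ respectively whose spectra are contained in the closed unit disc, and let X : H₁ → H₀ be a bounded linear operator. Suppose that for every φ ∈ Möb there exist unitary operators U_φ on H₀ and V_φ on H₁ such that φ(T₀) = U_φ*T₀U_φ, φ(T₁) = V_φ*T₁V_φ, and X V_φ = U_φ X. Then the bounded operator T on H₀ ⊕ H₁ defined in block form by T(x, y) = (T₀x + (XT₁ − T₀X)y, T₁y) is homogeneous. -/

import Mathlib

noncomputable section

open Complex Metric
/-- The block operator `(x, y) ↦ (T₀ x + (X T₁ − T₀ X) y, T₁ y)` on the Hilbert space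
direct sum `H₀ ⊕ H₁`. -/
def blockT2 {H0 H1 : Type*} [NormedAddCommGroup H0] [NormedSpace ℂ H0]
    [NormedAddCommGroup H1] [NormedSpace ℂ H1]
    (T0 : H0 →L[ℂ] H0) (T1 : H1 →L[ℂ] H1) (X : H1 →L[ℂ] H0) :
    WithLp 2 (H0 × H1) →L[ℂ] WithLp 2 (H0 × H1) :=
  let E := WithLp.prodContinuousLinearEquiv 2 ℂ H0 H1
  (E.symm.toContinuousLinearMap).comp
    ((((T0.comp (ContinuousLinearMap.fst ℂ H0 H1)) +
        ((X.comp T1 - T0.comp X).comp (ContinuousLinearMap.snd ℂ H0 H1))).prod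
      (T1.comp (ContinuousLinearMap.snd ℂ H0 H1))).comp E.toContinuousLinearMap)
/-- The action of the Möbius map `z ↦ e^{iθ}(z − a)/(1 − conj(a) z)` on an operator:
`φ(A) = e^{iθ}(A − a)(I − conj(a)A)⁻¹`. -/
def mobiusOp {E : Type*} [NormedAddCommGroup E] [NormedSpace ℂ E]
    (θ : ℝ) (a : ℂ) (A : E →L[ℂ] E) : E →L[ℂ] E :=
  Complex.exp (θ * Complex.I) •
    ((A - a • (1 : E →L[ℂ] E)) * Ring.inverse (1 - (starRingEnd ℂ) a • A))

/-- Two bounded operators are similar if they are intertwined by a bounded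
invertible operator. -/
def SimilarOp {E : Type*} [NormedAddCommGroup E] [NormedSpace ℂ E]
    (A B : E →L[ℂ] E) : Prop :=
  ∃ S : (E →L[ℂ] E)ˣ, (S : E →L[ℂ] E) * A = B * (S : E →L[ℂ] E)

/-- A bounded operator is weakly homogeneous if its spectrum is contained in the closed
unit disc and `φ(A)` is similar to `A` for every Möbius map `φ`. -/
def WeaklyHomogeneousOp {E : Type*} [NormedAddCommGroup E] [NormedSpace ℂ E]
    (A : E →L[ℂ] E) : Prop :=
  spectrum ℂ A ⊆ closedBall (0 : ℂ) 1 ∧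
    ∀ (θ : ℝ) (a : ℂ), ‖a‖ < 1 → SimilarOp (mobiusOp θ a A) A
/-- A bounded operator on a Hilbert space is homogeneous if its spectrum is contained in
the closed unit disc and `φ(A)` is unitarily equivalent to `A` for every Möbius map `φ`. -/
def HomogeneousOp {E : Type*} [NormedAddCommGroup E] [InnerProductSpace ℂ E] [CompleteSpace E]
    (A : E →L[ℂ] E) : Prop :=
  spectrum ℂ A ⊆ closedBall (0 : ℂ) 1 ∧
    ∀ (θ : ℝ) (a : ℂ), ‖a‖ < 1 →
      ∃ U ∈ unitary (E →L[ℂ] E), mobiusOp θ a A = star U * A * U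

/-- A bounded operator is strongly irreducible if the only bounded idempotents commuting
with it are `0` and `1`. -/
def StronglyIrreducibleOp {E : Type*} [NormedAddCommGroup E] [NormedSpace ℂ E]
    (A : E →L[ℂ] E) : Prop :=
  ∀ P : E →L[ℂ] E, P * P = P → A * P = P * A → P = 0 ∨ P = 1

/-- The Cowen–Douglas class `B_n(𝔻)`: `𝔻 ⊆ σ(A)`, `A − w` is surjective with
`n`-dimensional kernel for all `w ∈ 𝔻`, and the kernels span a dense subspace. -/
def CowenDouglasDisc {E : Type*} [NormedAddCommGroup E] [NormedSpace ℂ E]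
    (n : ℕ) (A : E →L[ℂ] E) : Prop :=
  ball (0 : ℂ) 1 ⊆ spectrum ℂ A ∧
  (∀ w ∈ ball (0 : ℂ) 1, Function.Surjective (A - w • (1 : E →L[ℂ] E))) ∧
  (∀ w ∈ ball (0 : ℂ) 1,
    Module.finrank ℂ (LinearMap.ker ((A - w • (1 : E →L[ℂ] E)) : E →ₗ[ℂ] E)) = n) ∧
  (⨆ w ∈ ball (0 : ℂ) 1,
    LinearMap.ker ((A - w • (1 : E →L[ℂ] E)) : E →ₗ[ℂ] E)).topologicalClosure = ⊤

/-!
With `S = [[1, X], [0, 1]]` one has `T = S (T₀ ⊕ T₁) S⁻¹`, so `σ(T) = σ(T₀ ⊕ T₁) ⊆ σ(T₀) ∪ σ(T₁)`.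
A Möbius map is a rational expression in its argument, hence commutes with similarities and with
the algebra homomorphism `(A, B) ↦ A ⊕ B`. The intertwining relation `X V = U X` says exactly that
`S` commutes with `W = U ⊕ V`, so `φ(T) = S W* (T₀ ⊕ T₁) W S⁻¹ = W* T W`.
-/

section Mobius

variable {R S : Type*} [Ring R] [Algebra ℂ R] [Ring S] [Algebra ℂ S]

def mobius (θ : ℝ) (a : ℂ) (A : R) : R :=
  Complex.exp (θ * Complex.I) • ((A - a • 1) * Ring.inverse (1 - (starRingEnd ℂ) a • A))

theorem mobiusOp_eq_mobius {E : Type*} [NormedAddCommGroup E] [NormedSpace ℂ E]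
    (θ : ℝ) (a : ℂ) (A : E →L[ℂ] E) : mobiusOp θ a A = mobius θ a A := rfl

theorem MonoidHom.map_ring_inverse_of_isUnit {M N : Type*} [MonoidWithZero M] [MonoidWithZero N]
    (f : M →* N) {x : M} (hx : IsUnit x) : f (Ring.inverse x) = Ring.inverse (f x) := by
  obtain ⟨u, rfl⟩ := hx
  rw [← Units.coe_map f u, Ring.inverse_unit, Ring.inverse_unit, Units.coe_map_inv]

theorem map_mobius {F : Type*} [FunLike F R S] [AlgHomClass F ℂ R S] (f : F) (θ : ℝ) {a : ℂ}
    {A : R} (hA : IsUnit (1 - (starRingEnd ℂ) a • A)) : f (mobius θ a A) = mobius θ a (f A) := by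
  have := (f : R →* S).map_ring_inverse_of_isUnit hA
  simp only [MonoidHom.coe_coe, map_sub, map_one, map_smul] at this
  simp only [mobius, map_smul, map_mul, map_sub, map_one, this]

theorem mobius_units_conj (θ : ℝ) {a : ℂ} {A : R} (hA : IsUnit (1 - (starRingEnd ℂ) a • A))
    (u : Rˣ) : mobius θ a (u * A * ↑u⁻¹) = u * mobius θ a A * ↑u⁻¹ := by
  simpa only [MulSemiringAction.toAlgEquiv_apply, ConjAct.units_smul_def,
    ConjAct.ofConjAct_toConjAct] using
    (map_mobius (MulSemiringAction.toAlgEquiv ℂ R (ConjAct.toConjAct u)) θ hA).symm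

theorem mobius_prod_mk (θ : ℝ) {a : ℂ} {A : R} {B : S}
    (hAB : IsUnit (1 - (starRingEnd ℂ) a • (A, B))) :
    mobius θ a (A, B) = (mobius θ a A, mobius θ a B) :=
  Prod.ext (map_mobius (AlgHom.fst ℂ R S) θ hAB) (map_mobius (AlgHom.snd ℂ R S) θ hAB)

theorem isUnit_one_sub_smul_of_spectrum_subset_closedBall {A : R}
    (hσ : spectrum ℂ A ⊆ closedBall 0 1) {b : ℂ} (hb : ‖b‖ < 1) : IsUnit (1 - b • A) := by
  rcases eq_or_ne b 0 with rfl | hb0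
  · simp
  have hbinv : b⁻¹ ∉ spectrum ℂ A := fun h => by
    have := hσ h
    rw [mem_closedBall_zero_iff, norm_inv] at this
    exact absurd (one_lt_inv₀ (norm_pos_iff.mpr hb0) |>.mpr hb) this.not_gt
  have : 1 - b • A = b • (algebraMap ℂ R b⁻¹ - A) := by
    rw [Algebra.algebraMap_eq_smul_one, smul_sub, smul_smul, mul_inv_cancel₀ hb0, one_smul]
  rw [this]
  exact (spectrum.notMem_iff.mp hbinv).smul (Units.mk0 b hb0)

end Mobius

theorem Prod.mk_mem_unitary {R S : Type*} [Monoid R] [StarMul R] [Monoid S] [StarMul S] {U : R}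
    {V : S} (hU : U ∈ unitary R) (hV : V ∈ unitary S) : (U, V) ∈ unitary (R × S) := by
  rw [Unitary.mem_iff] at hU hV ⊢
  exact ⟨Prod.ext hU.1 hV.1, Prod.ext hU.2 hV.2⟩

theorem units_conj_unitary_conj_of_commute {R : Type*} [Monoid R] [StarMul R] {W : R}
    (hW : W ∈ unitary R) {S : Rˣ} (hWS : Commute W S) (D : R) :
    S * (star W * D * W) * ↑S⁻¹ = star W * (S * D * ↑S⁻¹) * W := by
  have hstar : Commute (star W) S :=
    calc star W * S = star W * (W * S * star W) := by
          rw [(commute_unitary_iff_star_right_conjugate hW).mp hWS]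
      _ = S * star W := by simp only [← mul_assoc, Unitary.star_mul_self_of_mem hW, one_mul]
  calc S * (star W * D * W) * ↑S⁻¹ = S * star W * D * (W * ↑S⁻¹) := by simp only [mul_assoc]
    _ = star W * S * D * (↑S⁻¹ * W) := by rw [hstar.eq, hWS.units_inv_right.eq]
    _ = star W * (S * D * ↑S⁻¹) * W := by simp only [mul_assoc]

section Block

variable {H0 H1 : Type*} [NormedAddCommGroup H0] [NormedSpace ℂ H0]
  [NormedAddCommGroup H1] [NormedSpace ℂ H1]

def blockOp (A : H0 →L[ℂ] H0) (B : H1 →L[ℂ] H1) (C : H1 →L[ℂ] H0) :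
    WithLp 2 (H0 × H1) →L[ℂ] WithLp 2 (H0 × H1) :=
  let E := WithLp.prodContinuousLinearEquiv 2 ℂ H0 H1
  (E.symm.toContinuousLinearMap).comp
    ((((A.comp (ContinuousLinearMap.fst ℂ H0 H1)) +
        (C.comp (ContinuousLinearMap.snd ℂ H0 H1))).prod
      (B.comp (ContinuousLinearMap.snd ℂ H0 H1))).comp E.toContinuousLinearMap)

theorem blockT2_eq_blockOp (T0 : H0 →L[ℂ] H0) (T1 : H1 →L[ℂ] H1) (X : H1 →L[ℂ] H0) :
    blockT2 T0 T1 X = blockOp T0 T1 (X.comp T1 - T0.comp X) := rfl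

@[simp]
theorem blockOp_apply_fst (A : H0 →L[ℂ] H0) (B : H1 →L[ℂ] H1) (C : H1 →L[ℂ] H0)
    (v : WithLp 2 (H0 × H1)) : (blockOp A B C v).fst = A v.fst + C v.snd := rfl

@[simp]
theorem blockOp_apply_snd (A : H0 →L[ℂ] H0) (B : H1 →L[ℂ] H1) (C : H1 →L[ℂ] H0)
    (v : WithLp 2 (H0 × H1)) : (blockOp A B C v).snd = B v.snd := rfl

theorem WithLp.prod_continuousLinearMap_ext {F : Type*} [NormedAddCommGroup F] [NormedSpace ℂ F]
    {P Q : F →L[ℂ] WithLp 2 (H0 × H1)} (hfst : ∀ v, (P v).fst = (Q v).fst)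
    (hsnd : ∀ v, (P v).snd = (Q v).snd) : P = Q := by
  ext v
  exact WithLp.ofLp_injective 2 (Prod.ext (hfst v) (hsnd v))

theorem blockOp_mul (A A' : H0 →L[ℂ] H0) (B B' : H1 →L[ℂ] H1) (C C' : H1 →L[ℂ] H0) :
    blockOp A B C * blockOp A' B' C' = blockOp (A * A') (B * B') (A.comp C' + C.comp B') :=
  WithLp.prod_continuousLinearMap_ext (fun v => by simp; abel) (fun v => by simp)

theorem blockOp_add (A A' : H0 →L[ℂ] H0) (B B' : H1 →L[ℂ] H1) (C C' : H1 →L[ℂ] H0) :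
    blockOp A B C + blockOp A' B' C' = blockOp (A + A') (B + B') (C + C') :=
  WithLp.prod_continuousLinearMap_ext (fun v => by simp; abel) (fun v => by simp)

theorem blockOp_algebraMap (c : ℂ) :
    blockOp (algebraMap ℂ _ c) (algebraMap ℂ _ c) 0 =
      algebraMap ℂ (WithLp 2 (H0 × H1) →L[ℂ] WithLp 2 (H0 × H1)) c :=
  WithLp.prod_continuousLinearMap_ext (fun v => by simp) (fun v => by simp)

theorem blockOp_one : blockOp (1 : H0 →L[ℂ] H0) (1 : H1 →L[ℂ] H1) 0 = 1 := by
  simpa using blockOp_algebraMap (H0 := H0) (H1 := H1) 1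

def blockUnipotent (X : H1 →L[ℂ] H0) : (WithLp 2 (H0 × H1) →L[ℂ] WithLp 2 (H0 × H1))ˣ where
  val := blockOp 1 1 X
  inv := blockOp 1 1 (-X)
  val_inv := by rw [blockOp_mul, mul_one, mul_one, ← blockOp_one]; congr 1; ext; simp
  inv_val := by rw [blockOp_mul, mul_one, mul_one, ← blockOp_one]; congr 1; ext; simp

theorem blockT2_eq_blockUnipotent_conj (T0 : H0 →L[ℂ] H0) (T1 : H1 →L[ℂ] H1) (X : H1 →L[ℂ] H0) :
    blockT2 T0 T1 X = blockUnipotent X * blockOp T0 T1 0 * ↑(blockUnipotent X)⁻¹ := by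
  simp only [blockUnipotent, Units.inv_mk, blockT2_eq_blockOp, blockOp_mul]
  congr 1
  ext v
  simp [sub_eq_neg_add]

theorem blockUnipotent_commute_blockOp {X : H1 →L[ℂ] H0} {U : H0 →L[ℂ] H0} {V : H1 →L[ℂ] H1}
    (hX : X.comp V = U.comp X) : Commute (blockOp U V 0) (blockUnipotent X) := by
  simp only [Commute, SemiconjBy, blockUnipotent, blockOp_mul]
  congr 1
  simpa using hX.symm

end Block

section Hilbert

variable {H0 H1 : Type*} [NormedAddCommGroup H0] [InnerProductSpace ℂ H0] [CompleteSpace H0]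
  [NormedAddCommGroup H1] [InnerProductSpace ℂ H1] [CompleteSpace H1]

theorem star_blockOp_diag (A : H0 →L[ℂ] H0) (B : H1 →L[ℂ] H1) :
    star (blockOp A B 0) = blockOp (star A) (star B) 0 := by
  rw [ContinuousLinearMap.star_eq_adjoint, eq_comm, ContinuousLinearMap.eq_adjoint_iff]
  intro x y
  simp [WithLp.prod_inner_apply, ContinuousLinearMap.star_eq_adjoint,
    ContinuousLinearMap.adjoint_inner_left]

def blockDiag :
    (H0 →L[ℂ] H0) × (H1 →L[ℂ] H1) →⋆ₐ[ℂ] (WithLp 2 (H0 × H1) →L[ℂ] WithLp 2 (H0 × H1)) where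
  toFun p := blockOp p.1 p.2 0
  map_one' := blockOp_one
  map_mul' p q := by simp [blockOp_mul]
  map_zero' := by simpa using blockOp_algebraMap (H0 := H0) (H1 := H1) 0
  map_add' p q := by simp [blockOp_add]
  commutes' c := blockOp_algebraMap c
  map_star' p := (star_blockOp_diag p.1 p.2).symm

end Hilbert

/-- If `T₀` and `T₁` are homogeneous with unitary representations `U_φ`, `V_φ`
intertwined by `X` (i.e. `X V_φ = U_φ X`), then the block operator
`T = [[T₀, XT₁ − T₀X], [0, T₁]]` is homogeneous. -/
theorem homogeneous_blockT_of_intertwining_representations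
    {H0 H1 : Type*} [NormedAddCommGroup H0] [InnerProductSpace ℂ H0] [CompleteSpace H0]
    [NormedAddCommGroup H1] [InnerProductSpace ℂ H1] [CompleteSpace H1]
    (T0 : H0 →L[ℂ] H0) (T1 : H1 →L[ℂ] H1) (X : H1 →L[ℂ] H0)
    (hσ0 : spectrum ℂ T0 ⊆ closedBall (0 : ℂ) 1)
    (hσ1 : spectrum ℂ T1 ⊆ closedBall (0 : ℂ) 1)
    (hrep : ∀ (θ : ℝ) (a : ℂ), ‖a‖ < 1 →
      ∃ U ∈ unitary (H0 →L[ℂ] H0), ∃ V ∈ unitary (H1 →L[ℂ] H1),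
        mobiusOp θ a T0 = star U * T0 * U ∧
        mobiusOp θ a T1 = star V * T1 * V ∧
        X.comp V = U.comp X) :
    HomogeneousOp (blockT2 T0 T1 X) := by
  set S := blockUnipotent X
  have hT : blockT2 T0 T1 X = S * blockDiag (T0, T1) * ↑S⁻¹ :=
    blockT2_eq_blockUnipotent_conj T0 T1 X
  have hσ : spectrum ℂ (T0, T1) ⊆ closedBall 0 1 := by
    rw [Prod.spectrum_eq]
    exact Set.union_subset hσ0 hσ1
  have hσD : spectrum ℂ (blockDiag (T0, T1)) ⊆ closedBall 0 1 :=
    (AlgHom.spectrum_apply_subset _ _).trans hσ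
  refine ⟨by rwa [hT, spectrum.units_conjugate], fun θ a ha => ?_⟩
  have hconj : ‖(starRingEnd ℂ) a‖ < 1 := by rwa [Complex.norm_conj]
  obtain ⟨U, hU, V, hV, hU0, hV1, hX⟩ := hrep θ a ha
  have hW := Unitary.map_mem blockDiag (Prod.mk_mem_unitary hU hV)
  refine ⟨blockDiag (U, V), hW, ?_⟩
  have hunit := isUnit_one_sub_smul_of_spectrum_subset_closedBall hσ hconj
  calc mobiusOp θ a (blockT2 T0 T1 X)
      = S * blockDiag (mobius θ a (T0, T1)) * ↑S⁻¹ := by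
        rw [mobiusOp_eq_mobius, hT, map_mobius blockDiag θ hunit,
          mobius_units_conj θ (isUnit_one_sub_smul_of_spectrum_subset_closedBall hσD hconj)]
    _ = S * (star (blockDiag (U, V)) * blockDiag (T0, T1) * blockDiag (U, V)) * ↑S⁻¹ := by
        rw [mobius_prod_mk θ hunit, ← mobiusOp_eq_mobius, ← mobiusOp_eq_mobius, hU0, hV1,
          ← map_star, ← map_mul, ← map_mul]
        rfl
    _ = star (blockDiag (U, V)) * blockT2 T0 T1 X * blockDiag (U, V) := by
        rw [hT, units_conj_unitary_conj_of_commute hW (blockUnipotent_commute_blockOp hX)]
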